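/- Let m > 0 be real and p ≥ 1 an integer, and let f(x) = -m²x² + x^{2p+2}/(p+1). There exist constants η₀ > 0 and C > 0 (depending only on m and p) such that for every η with 0 < η < η₀ and every (a,b) ∈ ℝ² satisfying a ≥ η and |b² + f(a) - f(η)| ≤ η³, there exists (ã, b̃) ∈ ℝ² with ã > 0, b̃² + f(ã) = f(η), and |a - ã| + |b - b̃| ≤ C η². -/

import Mathlib

/-!
Write `δ = b² + f a - f η`. If `|b| ≥ η`, keep `a` and replace `b` by `b' = ± √(f η - f a)`:
then `|b - b'| * |b| ≤ |δ| ≤ η³`. If `|b| < η`, keep `b` and move `a` to a solution `a'` of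
`f a' = f η - b²`: by the intermediate value and mean value theorems, `|a - a'| ≤ η³ / k` as
soon as `|f'| ≥ k` near `a`. Here `f a ≥ f η - 2η² ≥ -O(η²)`. Either `a ^ (2p) ≤ 3m²/2`, and
then `f a ≤ -m²a²/4` forces `a = O(η)`, where `|f' x| ≥ m² x ≥ m² η / 2`; or
`a ^ (2p) ≥ 3m²/2`, and then `f'` is bounded below near `a` by a constant depending only on `m`.
-/

open Set Filter Topology

noncomputable def potential (m : ℝ) (p : ℕ) (x : ℝ) : ℝ :=
  -(m ^ 2) * x ^ 2 + x ^ (2 * p + 2) / ((p : ℝ) + 1)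

theorem exists_mem_Icc_eq_of_le_deriv {f : ℝ → ℝ} {a r k y : ℝ} (hr : 0 ≤ r)
    (hfc : ContinuousOn f (Icc (a - r) (a + r)))
    (hfd : DifferentiableOn ℝ f (Ioo (a - r) (a + r)))
    (hk : ∀ x ∈ Ioo (a - r) (a + r), k ≤ deriv f x) (hy : |f a - y| ≤ k * r) :
    ∃ a' ∈ Icc (a - r) (a + r), f a' = y := by
  rw [← interior_Icc] at hfd hk
  have hslope := (convex_Icc (a - r) (a + r)).mul_sub_le_image_sub_of_le_deriv hfc hfd hk
  have ha : a ∈ Icc (a - r) (a + r) := ⟨by linarith, by linarith⟩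
  have hleft := hslope _ ⟨le_rfl, by linarith⟩ a ha (by linarith)
  have hright := hslope a ha _ ⟨by linarith, le_rfl⟩ (by linarith)
  obtain ⟨hy₁, hy₂⟩ := abs_le.1 hy
  exact intermediate_value_Icc (by linarith) hfc ⟨by linarith, by linarith⟩

theorem exists_mem_Icc_eq_of_deriv_le {f : ℝ → ℝ} {a r k y : ℝ} (hr : 0 ≤ r)
    (hfc : ContinuousOn f (Icc (a - r) (a + r)))
    (hfd : DifferentiableOn ℝ f (Ioo (a - r) (a + r)))
    (hk : ∀ x ∈ Ioo (a - r) (a + r), deriv f x ≤ -k) (hy : |f a - y| ≤ k * r) :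
    ∃ a' ∈ Icc (a - r) (a + r), f a' = y := by
  have hk' : ∀ x ∈ Ioo (a - r) (a + r), k ≤ deriv (fun x => -f x) x := fun x hx => by
    rw [deriv.fun_neg]; linarith [hk x hx]
  obtain ⟨a', ha', hfa'⟩ := exists_mem_Icc_eq_of_le_deriv (y := -y) hr hfc.neg hfd.neg hk'
    (by rwa [Pi.neg_apply, ← neg_add', abs_neg, ← sub_eq_add_neg])
  exact ⟨a', ha', neg_inj.1 hfa'⟩

theorem exists_sq_eq_abs_sub_mul_abs_le (b : ℝ) {t : ℝ} (ht : 0 ≤ t) :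
    ∃ b', b' ^ 2 = t ∧ |b - b'| * |b| ≤ |b ^ 2 - t| := by
  wlog hb : 0 ≤ b generalizing b
  · obtain ⟨b', hb't, hbb'⟩ := this (-b) (by linarith)
    refine ⟨-b', by rwa [neg_sq], ?_⟩
    rwa [abs_neg, neg_sq, ← abs_neg, neg_sub', neg_neg] at hbb'
  refine ⟨√t, Real.sq_sqrt ht, ?_⟩
  have hfactor : b ^ 2 - t = (b - √t) * (b + √t) := by
    rw [show (b - √t) * (b + √t) = b ^ 2 - √t ^ 2 by ring, Real.sq_sqrt ht]
  rw [hfactor, abs_mul, abs_of_nonneg hb, abs_of_nonneg (by positivity : 0 ≤ b + √t)]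
  exact mul_le_mul_of_nonneg_left (by linarith [Real.sqrt_nonneg t]) (abs_nonneg _)

theorem one_sub_mul_mul_pow_le_pow {a x t : ℝ} (n : ℕ) (ha : 0 ≤ a) (ht : t ≤ 1)
    (hx : (1 - t) * a ≤ x) : (1 - n * t) * a ^ n ≤ x ^ n := by
  have hbernoulli : 1 - n * t ≤ (1 - t) ^ n := by
    simpa [sub_eq_add_neg] using one_add_mul_le_pow (by linarith : (-2 : ℝ) ≤ -t) n
  calc (1 - n * t) * a ^ n ≤ (1 - t) ^ n * a ^ n := by gcongr
    _ = ((1 - t) * a) ^ n := (mul_pow _ _ _).symm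
    _ ≤ x ^ n := pow_le_pow_left₀ (mul_nonneg (by linarith) ha) hx n

theorem min_one_le_of_le_pow {x c : ℝ} {n : ℕ} (hx : 0 ≤ x) (hn : n ≠ 0) (h : c ≤ x ^ n) :
    min 1 c ≤ x := by
  rcases le_total x 1 with hx1 | hx1
  · exact (min_le_right _ _).trans (h.trans (pow_le_of_le_one hx hx1 hn))
  · exact (min_le_left _ _).trans hx1

theorem eventually_mul_pow_le (c : ℝ) {ε : ℝ} (hε : 0 < ε) {n : ℕ} (hn : n ≠ 0) :
    ∀ᶠ η in 𝓝[>] (0 : ℝ), c * η ^ n ≤ ε := by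
  have hlim : Tendsto (fun η : ℝ => c * η ^ n) (𝓝 0) (𝓝 0) := by
    simpa [hn] using ((continuous_pow n).const_mul c).tendsto (0 : ℝ)
  exact nhdsWithin_le_nhds (hlim.eventually (eventually_le_nhds hε))

theorem hasDerivAt_potential (m : ℝ) (p : ℕ) (x : ℝ) :
    HasDerivAt (potential m p) (2 * x * (x ^ (2 * p) - m ^ 2)) x := by
  have h := ((hasDerivAt_pow 2 x).const_mul (-(m ^ 2))).add
    ((hasDerivAt_pow (2 * p + 2) x).div_const ((p : ℝ) + 1))
  refine h.congr_deriv ?_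
  rw [show 2 * p + 2 - 1 = 2 * p + 1 by omega]
  push_cast
  field_simp
  ring

theorem differentiable_potential (m : ℝ) (p : ℕ) : Differentiable ℝ (potential m p) :=
  fun x => (hasDerivAt_potential m p x).differentiableAt

theorem neg_mul_sq_le_potential (m : ℝ) (p : ℕ) (x : ℝ) :
    -(m ^ 2) * x ^ 2 ≤ potential m p x := by
  have : 0 ≤ x ^ (2 * p + 2) / ((p : ℝ) + 1) := by
    rw [show 2 * p + 2 = 2 * (p + 1) by ring, pow_mul]; positivity
  unfold potential; linarith

section Potential

variable {m : ℝ} {p : ℕ}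

theorem potential_le_of_pow_le (hp : 1 ≤ p) {x : ℝ} (hx : x ^ (2 * p) ≤ 3 / 2 * m ^ 2) :
    potential m p x ≤ -(m ^ 2 / 4) * x ^ 2 := by
  have hp2 : (2 : ℝ) ≤ p + 1 := by norm_cast; omega
  have hquot : x ^ (2 * p) / ((p : ℝ) + 1) ≤ 3 / 4 * m ^ 2 := by
    rw [div_le_iff₀ (by positivity)]; nlinarith [sq_nonneg m]
  calc potential m p x = x ^ 2 * (x ^ (2 * p) / ((p : ℝ) + 1) - m ^ 2) := by
        unfold potential; ring
    _ ≤ x ^ 2 * (3 / 4 * m ^ 2 - m ^ 2) := by gcongr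
    _ = -(m ^ 2 / 4) * x ^ 2 := by ring

theorem deriv_potential_le (hp : 1 ≤ p) {x : ℝ} (hx₀ : 0 ≤ x) (hx₁ : x ≤ 1)
    (hxm : x ^ 2 ≤ m ^ 2 / 2) : deriv (potential m p) x ≤ -(m ^ 2 * x) := by
  have hpow : x ^ (2 * p) ≤ x ^ 2 := pow_le_pow_of_le_one hx₀ hx₁ (by omega)
  rw [(hasDerivAt_potential m p x).deriv]
  nlinarith

theorem le_deriv_potential (hp : 1 ≤ p) {x : ℝ} (hx : 0 ≤ x)
    (hxm : 9 / 8 * m ^ 2 ≤ x ^ (2 * p)) :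
    min 1 (m ^ 2) * m ^ 2 / 4 ≤ deriv (potential m p) x := by
  have hmin : min 1 (m ^ 2) ≤ x :=
    min_one_le_of_le_pow (n := 2 * p) hx (by omega) (by nlinarith [sq_nonneg m])
  rw [(hasDerivAt_potential m p x).deriv]
  nlinarith [sq_nonneg m]

theorem eventually_exists_potential_eq_near_of_pow_le (hm : 0 < m) (hp : 1 ≤ p) :
    ∃ C > 0, ∀ᶠ η in 𝓝[>] 0, ∀ a y, η ≤ a → a ^ (2 * p) ≤ 3 / 2 * m ^ 2 →
      potential m p η - 2 * η ^ 2 ≤ potential m p a → |potential m p a - y| ≤ η ^ 3 →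
      ∃ a', 0 < a' ∧ potential m p a' = y ∧ |a - a'| ≤ C * η ^ 2 := by
  have hm2 : 0 < m ^ 2 := by positivity
  set K := 4 * (m ^ 2 + 2) / m ^ 2
  refine ⟨2 / m ^ 2, by positivity, ?_⟩
  filter_upwards [eventually_mem_nhdsWithin,
    nhdsWithin_le_nhds (eventually_le_nhds (by positivity : 0 < m ^ 2 / 4)),
    eventually_mul_pow_le (4 * K) (by positivity : 0 < min 1 (m ^ 2 / 2)) two_ne_zero]
    with η (hη : 0 < η) hηm hηK a y ha hpow hfa hy
  have ha_sq : a ^ 2 ≤ K * η ^ 2 := by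
    have h₁ := potential_le_of_pow_le hp hpow
    have h₂ := neg_mul_sq_le_potential m p η
    rw [div_mul_eq_mul_div, le_div_iff₀ hm2]
    linarith
  set r := 2 / m ^ 2 * η ^ 2
  have hr : r ≤ η / 2 := by
    rw [show r = 2 * η ^ 2 / m ^ 2 by ring, div_le_div_iff₀ hm2 two_pos]
    nlinarith
  have hderiv : ∀ x ∈ Ioo (a - r) (a + r), deriv (potential m p) x ≤ -(m ^ 2 * η / 2) := by
    rintro x ⟨hx₁, hx₂⟩
    have hx_pos : 0 < x := by linarith
    have hx_sq : x ^ 2 ≤ min 1 (m ^ 2 / 2) := calc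
      x ^ 2 ≤ (2 * a) ^ 2 := pow_le_pow_left₀ hx_pos.le (by linarith) 2
      _ ≤ 4 * K * η ^ 2 := by linarith
      _ ≤ min 1 (m ^ 2 / 2) := hηK
    have hx_le : x ≤ 1 :=
      (pow_le_one_iff_of_nonneg hx_pos.le two_ne_zero).1 (hx_sq.trans (min_le_left _ _))
    calc deriv (potential m p) x ≤ -(m ^ 2 * x) :=
          deriv_potential_le hp hx_pos.le hx_le (hx_sq.trans (min_le_right _ _))
      _ ≤ -(m ^ 2 * η / 2) := by nlinarith
  obtain ⟨a', ha', rfl⟩ := exists_mem_Icc_eq_of_deriv_le (by positivity)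
    (differentiable_potential m p).continuous.continuousOn
    (differentiable_potential m p).differentiableOn hderiv
    (by convert hy using 1; simp only [r]; field_simp)
  refine ⟨a', by linarith [ha'.1], rfl, ?_⟩
  exact abs_sub_le_iff.2 ⟨by linarith [ha'.1], by linarith [ha'.2]⟩

theorem eventually_exists_potential_eq_near_of_le_pow (hm : 0 < m) (hp : 1 ≤ p) :
    ∃ C > 0, ∀ᶠ η in 𝓝[>] 0, ∀ a y, 0 < a → 3 / 2 * m ^ 2 ≤ a ^ (2 * p) →
      |potential m p a - y| ≤ η ^ 3 →
      ∃ a', 0 < a' ∧ potential m p a' = y ∧ |a - a'| ≤ C * η ^ 2 := by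
  have hm2 : 0 < m ^ 2 := by positivity
  have hp₁ : (1 : ℝ) ≤ p := by exact_mod_cast hp
  set β := min 1 (m ^ 2)
  have hβ : 0 < β := lt_min one_pos hm2
  set k := β * m ^ 2 / 4
  have hk : 0 < k := by positivity
  set t : ℝ := 1 / (8 * p)
  have ht : t ≤ 1 / 8 := by
    rw [div_le_div_iff₀ (by positivity) (by norm_num)]; linarith
  refine ⟨1 / k, by positivity, ?_⟩
  filter_upwards [eventually_mem_nhdsWithin, nhdsWithin_le_nhds (eventually_le_nhds one_pos),
    eventually_mul_pow_le (1 / k) (by positivity : 0 < t * β) two_ne_zero]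
    with η (hη : 0 < η) hη₁ hηβ a y ha hpow hy
  set r := 1 / k * η ^ 2
  have haβ : β ≤ a := min_one_le_of_le_pow (n := 2 * p) ha.le (by omega) (by linarith)
  have hr : r ≤ t * a := hηβ.trans (by gcongr)
  have hderiv : ∀ x ∈ Ioo (a - r) (a + r), k ≤ deriv (potential m p) x := by
    rintro x ⟨hx₁, -⟩
    have hxa : (1 - t) * a ≤ x := by linarith
    -- Bernoulli: shrinking `a` by the factor `1 - 1/(8p)` shrinks `a ^ (2p)` by at most `3/4`
    have hxpow := one_sub_mul_mul_pow_le_pow (2 * p) ha.le (by linarith) hxa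
    have ht_mul : ((2 * p : ℕ) : ℝ) * t = 1 / 4 := by
      simp only [t]; push_cast; field_simp; ring
    rw [ht_mul] at hxpow
    exact le_deriv_potential hp ((mul_nonneg (by linarith) ha.le).trans hxa) (by linarith)
  have hkr : η ^ 3 ≤ k * r := by
    rw [show k * r = η ^ 2 by simp only [r]; field_simp]
    exact pow_le_pow_of_le_one hη.le hη₁ (by norm_num)
  obtain ⟨a', ha', rfl⟩ := exists_mem_Icc_eq_of_le_deriv (by positivity)
    (differentiable_potential m p).continuous.continuousOn
    (differentiable_potential m p).differentiableOn hderiv (hy.trans hkr)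
  refine ⟨a', by nlinarith [ha'.1], rfl, ?_⟩
  exact abs_sub_le_iff.2 ⟨by linarith [ha'.1], by linarith [ha'.2]⟩

theorem eventually_exists_potential_eq_near (hm : 0 < m) (hp : 1 ≤ p) :
    ∃ C > 0, ∀ᶠ η in 𝓝[>] 0, ∀ a y, η ≤ a →
      potential m p η - 2 * η ^ 2 ≤ potential m p a → |potential m p a - y| ≤ η ^ 3 →
      ∃ a', 0 < a' ∧ potential m p a' = y ∧ |a - a'| ≤ C * η ^ 2 := by
  obtain ⟨C₁, hC₁, h₁⟩ := eventually_exists_potential_eq_near_of_pow_le hm hp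
  obtain ⟨C₂, hC₂, h₂⟩ := eventually_exists_potential_eq_near_of_le_pow hm hp
  refine ⟨max C₁ C₂, by positivity, ?_⟩
  filter_upwards [h₁, h₂, eventually_mem_nhdsWithin] with η h₁ h₂ (hη : 0 < η) a y ha hfa hy
  rcases le_total (a ^ (2 * p)) (3 / 2 * m ^ 2) with hpow | hpow
  · obtain ⟨a', ha', hfa', haa'⟩ := h₁ a y ha hpow hfa hy
    exact ⟨a', ha', hfa', haa'.trans (by gcongr; exact le_max_left _ _)⟩
  · obtain ⟨a', ha', hfa', haa'⟩ := h₂ a y (hη.trans_le ha) hpow hy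
    exact ⟨a', ha', hfa', haa'.trans (by gcongr; exact le_max_right _ _)⟩

end Potential

/-- approximate energy level `f(η)` and `a ≥ η` force `(a,b)` to be
`Cη²`-close to the periodic orbit `K_η = {(a',b') : a' > 0, b'² + f(a') = f(η)}`. -/
theorem close_to_periodic_orbit (m : ℝ) (p : ℕ) (hm : 0 < m) (hp : 1 ≤ p) :
    ∃ η₀ > 0, ∃ C > 0, ∀ η : ℝ, 0 < η → η < η₀ →
      ∀ a b : ℝ,
        η ≤ a →
        |b ^ 2 + potential m p a - potential m p η| ≤ η ^ 3 →
        ∃ a' b' : ℝ, 0 < a' ∧ b' ^ 2 + potential m p a' = potential m p η ∧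
          |a - a'| + |b - b'| ≤ C * η ^ 2 := by
  obtain ⟨C, hC, hnear⟩ := eventually_exists_potential_eq_near hm hp
  obtain ⟨η₀, hη₀, hsmall⟩ := mem_nhdsGT_iff_exists_Ioo_subset.1
    (hnear.and (nhdsWithin_le_nhds (eventually_le_nhds one_pos)))
  refine ⟨η₀, hη₀, max C 1, by positivity, fun η hη hηη₀ a b ha hab => ?_⟩
  obtain ⟨hnear, hη₁⟩ := hsmall ⟨hη, hηη₀⟩
  have hη₃ : η ^ 3 ≤ η ^ 2 := pow_le_pow_of_le_one hη.le hη₁ (by norm_num)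
  obtain ⟨hδ₁, hδ₂⟩ := abs_le.1 hab
  rcases le_or_gt η |b| with hb | hb
  · have hb_sq : η ^ 2 ≤ b ^ 2 := by simpa using pow_le_pow_left₀ hη.le hb 2
    obtain ⟨b', hb', hbb'⟩ := exists_sq_eq_abs_sub_mul_abs_le b
      (t := potential m p η - potential m p a) (by linarith)
    rw [sub_sub_eq_add_sub] at hbb'
    have hbb'_le : |b - b'| ≤ η ^ 2 := by
      refine le_of_mul_le_mul_right ?_ hη
      calc |b - b'| * η ≤ |b - b'| * |b| := by gcongr
        _ ≤ η ^ 3 := hbb'.trans hab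
        _ = η ^ 2 * η := by ring
    refine ⟨a, b', hη.trans_le ha, by linarith, ?_⟩
    rw [sub_self, abs_zero, zero_add]
    exact hbb'_le.trans (le_mul_of_one_le_left (sq_nonneg η) (le_max_right C 1))
  · have hb_sq : b ^ 2 ≤ η ^ 2 := by simpa using pow_le_pow_left₀ (abs_nonneg b) hb.le 2
    obtain ⟨a', ha', hfa', haa'⟩ := hnear a (potential m p η - b ^ 2) ha (by linarith)
      (by convert hab using 2; ring)
    refine ⟨a', b, ha', by linarith, ?_⟩
    rw [sub_self, abs_zero, add_zero]
    exact haa'.trans (by gcongr; exact le_max_left _ _)
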